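/- arXiv:2407.00765 — 2 statements merged into one kernel-verified Lean document; each statement's English description precedes it below -/
import Mathlib

section
/- Let n ≥ 1 and let x_0 < x_1 < ⋯ < x_n be real numbers, and for each i ∈ {1,…,n} let a_i < b_i be real numbers. Define s_i = (b_i − a_i)/(x_i − x_{i−1}) and ψ_i(x) = s_i·ReLU(x − x_{i−1}) − s_i·ReLU(x − x_i) + a_i, where ReLU(t) = max(t, 0). Let L_i : ℝ → ℝ be the affine map L_i(t) = x_{i−1} + (t − a_i)·(x_i − x_{i−1})/(b_i − a_i) (so L_i(a_i) = x_{i−1} and L_i(b_i) = x_i). Given any function f : ℝ → ℝ, define f_i = f ∘ L_i. Then for every x ∈ [x_0, x_n], f(x) = (∑_{i=1}^n f_i(ψ_i(x))) − ∑_{i=1}^{n−1} f(x_i). -/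
/-- The rectified linear unit `ReLU(t) = max(t, 0)`. -/
noncomputable def relu (t : ℝ) : ℝ := max t 0

/-- The piecewise linear map
`ψ_i(t) = s_i · ReLU(t − x_{i−1}) − s_i · ReLU(t − x_i) + a_i`
with `s_i = (b_i − a_i)/(x_i − x_{i−1})`. -/
noncomputable def psiFun (x a b : ℕ → ℝ) (i : ℕ) (t : ℝ) : ℝ :=
  ((b i - a i) / (x i - x (i - 1))) * relu (t - x (i - 1))
    - ((b i - a i) / (x i - x (i - 1))) * relu (t - x i) + a i

/-- The affine map `L_i(t) = x_{i−1} + (t − a_i)·(x_i − x_{i−1})/(b_i − a_i)`,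
so that `L_i(a_i) = x_{i−1}` and `L_i(b_i) = x_i`. -/
noncomputable def LFun (x a b : ℕ → ℝ) (i : ℕ) (t : ℝ) : ℝ :=
  x (i - 1) + (t - a i) * (x i - x (i - 1)) / (b i - a i)

lemma clamp_eq (x a b : ℕ → ℝ) (i : ℕ) (hxi : x (i-1) < x i) (habi : a i < b i) (t : ℝ) :
    LFun x a b i (psiFun x a b i t) = min (max t (x (i-1))) (x i) := by
  have hd : x i - x (i-1) ≠ 0 := sub_ne_zero.mpr hxi.ne'
  have hb : b i - a i ≠ 0 := sub_ne_zero.mpr habi.ne'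
  have key : LFun x a b i (psiFun x a b i t)
      = x (i-1) + (relu (t - x (i-1)) - relu (t - x i)) := by
    unfold LFun psiFun
    field_simp
    ring
  rw [key]
  rcases le_total t (x (i-1)) with h1 | h1
  · have r1 : relu (t - x (i-1)) = 0 := max_eq_right (by linarith)
    have r2 : relu (t - x i) = 0 := max_eq_right (by linarith)
    rw [r1, r2, max_eq_right h1, min_eq_left hxi.le]; ring
  · have r1 : relu (t - x (i-1)) = t - x (i-1) := max_eq_left (by linarith)
    rw [max_eq_left h1]
    rcases le_total t (x i) with h2 | h2
    · have r2 : relu (t - x i) = 0 := max_eq_right (by linarith)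
      rw [r1, r2, min_eq_left h2]; ring
    · have r2 : relu (t - x i) = t - x i := max_eq_left (by linarith)
      rw [r1, r2, min_eq_right h2]; ring

lemma x_mono (n : ℕ) (x : ℕ → ℝ) (hx : ∀ i ∈ Finset.Icc 1 n, x (i - 1) < x i) :
    ∀ j ≤ n, ∀ i ≤ j, x i ≤ x j := by
  intro j hj
  induction j with
  | zero =>
    intro i hi
    interval_cases i
    exact le_rfl
  | succ m ih =>
    intro i hi
    rcases Nat.lt_succ_iff_lt_or_eq.mp (Nat.lt_succ_of_le hi) with h | h
    · have h1 : x i ≤ x m := ih (by omega) i (by omega)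
      have h2 : x m < x (m+1) := by
        have := hx (m+1) (by simp; omega)
        simpa using this
      linarith
    · rw [h]

lemma main_aux (n : ℕ) (hn : 1 ≤ n) (x a b : ℕ → ℝ)
    (hx : ∀ i ∈ Finset.Icc 1 n, x (i - 1) < x i)
    (hab : ∀ i ∈ Finset.Icc 1 n, a i < b i)
    (f : ℝ → ℝ) :
    ∀ t ∈ Set.Icc (x 0) (x n),
      f t = (∑ i ∈ Finset.Icc 1 n, f (LFun x a b i (psiFun x a b i t)))
              - ∑ i ∈ Finset.Icc 1 (n - 1), f (x i) := by
  induction n with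
  | zero => omega
  | succ m ih =>
    intro t ht
    have hclamp : ∀ i ∈ Finset.Icc 1 (m+1),
        LFun x a b i (psiFun x a b i t) = min (max t (x (i-1))) (x i) :=
      fun i hi => clamp_eq x a b i (hx i hi) (hab i hi) t
    rcases Nat.eq_zero_or_pos m with rfl | hm
    · simp only [Finset.Icc_self, Finset.sum_singleton, Nat.sub_self,
        Nat.zero_add] at *
      rw [hclamp 1 (by simp)]
      have h1 : (1:ℕ) - 1 = 0 := rfl
      rw [h1, max_eq_left ht.1, min_eq_left ht.2]
      simp [show Finset.Icc 1 0 = ∅ by rfl]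
    · have hsum : ∑ i ∈ Finset.Icc 1 (m+1), f (LFun x a b i (psiFun x a b i t))
          = (∑ i ∈ Finset.Icc 1 m, f (LFun x a b i (psiFun x a b i t)))
            + f (LFun x a b (m+1) (psiFun x a b (m+1) t)) :=
        Finset.sum_Icc_succ_top (by omega) _
    -- split ∑_{1..m} f(x i) = ∑_{1..m-1} f(x i) + f(x m)
      have hsum2 : ∑ i ∈ Finset.Icc 1 m, f (x i)
          = (∑ i ∈ Finset.Icc 1 (m-1), f (x i)) + f (x m) := by
        conv_lhs => rw [show m = (m-1)+1 by omega]
        rw [Finset.sum_Icc_succ_top (by omega)]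
        rw [show (m-1)+1 = m by omega]
      have hxm1 : x m < x (m+1) := by
        have := hx (m+1) (by simp)
        simpa using this
      have hxsub : ∀ i ∈ Finset.Icc 1 m, x (i-1) < x i :=
        fun i hi => hx i (by simp at hi ⊢; omega)
      have habsub : ∀ i ∈ Finset.Icc 1 m, a i < b i :=
        fun i hi => hab i (by simp at hi ⊢; omega)
      have hclamp_top : LFun x a b (m+1) (psiFun x a b (m+1) t)
          = min (max t (x m)) (x (m+1)) := by
        have := hclamp (m+1) (by simp)
        simpa using this
      rcases le_total t (x m) with hc | hc
      · have := ih hm hxsub habsub t ⟨ht.1, hc⟩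
        rw [hsum]
        simp only [Nat.add_sub_cancel]
        rw [hsum2, hclamp_top, min_eq_left (by simp [max_le_iff]; constructor <;> linarith),
          max_eq_right hc]
        linarith [this]
      · have hmono := x_mono (m+1) x hx
        have hall : ∀ i ∈ Finset.Icc 1 m,
            f (LFun x a b i (psiFun x a b i t)) = f (x i) := by
          intro i hi
          simp only [Finset.mem_Icc] at hi
          have hxi : x i ≤ t := le_trans (hmono m (by omega) i hi.2) hc
          have hxi1 : x (i-1) ≤ t := le_trans (hmono m (by omega) (i-1) (by omega)) hc
          rw [hclamp i (by simp; omega), max_eq_left hxi1, min_eq_right hxi]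
        rw [hsum]
        simp only [Nat.add_sub_cancel]
        rw [Finset.sum_congr rfl hall, hclamp_top,
          max_eq_left hc, min_eq_left ht.2]
        ring

/-- One-dimensional multi-component decomposition:
`f(x) = ∑_{i=1}^n f_i(ψ_i(x)) − ∑_{i=1}^{n−1} f(x_i)` on `[x_0, x_n]`,
where `f_i = f ∘ L_i`. -/
theorem mmnn_decomposition_1D (n : ℕ) (hn : 1 ≤ n) (x a b : ℕ → ℝ)
    (hx : ∀ i ∈ Finset.Icc 1 n, x (i - 1) < x i)
    (hab : ∀ i ∈ Finset.Icc 1 n, a i < b i)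
    (f : ℝ → ℝ) :
    ∀ t ∈ Set.Icc (x 0) (x n),
      f t = (∑ i ∈ Finset.Icc 1 n, f (LFun x a b i (psiFun x a b i t)))
              - ∑ i ∈ Finset.Icc 1 (n - 1), f (x i) := by
  exact main_aux n hn x a b hx hab f
end

section
/- Let n, m ≥ 1, let x_0 < x_1 < ⋯ < x_n and y_0 < y_1 < ⋯ < y_m be real numbers, let a_i < b_i for i ∈ {1,…,n} and c_j < d_j for j ∈ {1,…,m}. Let L_{1,i} : ℝ → ℝ be the affine map with L_{1,i}(a_i) = x_{i−1} and L_{1,i}(b_i) = x_i, and L_{2,j} : ℝ → ℝ the affine map with L_{2,j}(c_j) = y_{j−1} and L_{2,j}(d_j) = y_j. Define ψ_i(x) = b_i if x > x_i, ψ_i(x) = L_{1,i}^{−1}(x) if x_{i−1} ≤ x ≤ x_i, ψ_i(x) = a_i if x < x_{i−1}; and φ_j(y) = d_j if y > y_j, φ_j(y) = L_{2,j}^{−1}(y) if y_{j−1} ≤ y ≤ y_j, φ_j(y) = c_j if y < y_{j−1}. For a function f : ℝ × ℝ → ℝ define f_{i,0}(x,y) = f(L_{1,i}(x), y), f_{0,j}(x,y)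 = f(x, L_{2,j}(y)), and f_{i,j}(x,y) = f(L_{1,i}(x), L_{2,j}(y)). Then for all (x, y) ∈ [x_0, x_n] × [y_0, y_m], f(x, y) = ∑_{i=1}^n ∑_{j=1}^m f_{i,j}(ψ_i(x), φ_j(y)) − ∑_{i=1}^n ∑_{j=1}^{m−1} f_{i,0}(ψ_i(x), y_j) − ∑_{i=1}^{n−1} ∑_{j=1}^m f_{0,j}(x_i, φ_j(y)) + ∑_{i=1}^{n−1} ∑_{j=1}^{m−1} f(x_i, y_j). -/
/-- The clamped inverse of `L_i`:
`ψ_i(t) = b_i` for `t > x_i`, `ψ_i(t) = L_i⁻¹(t)` on `[x_{i−1}, x_i]`,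
and `ψ_i(t) = a_i` for `t < x_{i−1}`. -/
noncomputable def clampInv (x a b : ℕ → ℝ) (i : ℕ) (t : ℝ) : ℝ :=
  if x i < t then b i
  else if x (i - 1) ≤ t then a i + (t - x (i - 1)) * (b i - a i) / (x i - x (i - 1))
  else a i

open Finset

lemma LFun_clampInv (x a b : ℕ → ℝ) (i : ℕ) (hx : x (i - 1) < x i) (hab : a i < b i) (u : ℝ) :
    LFun x a b i (clampInv x a b i u) = max (x (i - 1)) (min (x i) u) := by
  have hba : b i - a i ≠ 0 := (sub_pos.2 hab).ne'
  have hx' : x i - x (i - 1) ≠ 0 := (sub_pos.2 hx).ne'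
  unfold LFun clampInv
  split_ifs with hright hleft
  · rw [min_eq_left hright.le, max_eq_right hx.le]
    field_simp
    ring
  · rw [min_eq_right (not_lt.1 hright), max_eq_right hleft]
    field_simp
    ring
  · rw [max_eq_left ((min_le_right _ _).trans (not_le.1 hleft).le)]
    ring

lemma monotoneOn_Iic_of_le_sub_one {α : Type*} [Preorder α] {x : ℕ → α} {n : ℕ}
    (hx : ∀ i ∈ Icc 1 n, x (i - 1) ≤ x i) : MonotoneOn x (Set.Iic n) :=
  monotoneOn_of_le_succ Set.ordConnected_Iic fun k _ _ hk => by
    simpa using hx (k + 1) (mem_Icc.2 ⟨by omega, hk⟩)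

theorem eq_sum_comp_clamp_sub_sum {α G : Type*} [LinearOrder α] [AddCommGroup G]
    {x : ℕ → α} {n : ℕ} (hx : ∀ i ∈ Icc 1 (n + 1), x (i - 1) ≤ x i) (h : α → G)
    {u : α} (hu : u ∈ Set.Icc (x 0) (x (n + 1))) :
    h u = ∑ i ∈ Icc 1 (n + 1), h (max (x (i - 1)) (min (x i) u)) - ∑ i ∈ Icc 1 n, h (x i) := by
  induction n with
  | zero => simp [min_eq_right hu.2, max_eq_right hu.1]
  | succ n ih =>
    rw [sum_Icc_succ_top (by omega : 1 ≤ n + 2)]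
    simp only [Nat.add_sub_cancel]
    rcases le_or_gt u (x (n + 1)) with hle | hgt
    · rw [sum_Icc_succ_top (by omega : 1 ≤ n + 1) (fun i => h (x i)),
        max_eq_left ((min_le_right _ _).trans hle),
        ih (fun i hi => hx i (mem_Icc.2 ⟨(mem_Icc.1 hi).1, by grind⟩)) ⟨hu.1, hle⟩]
      abel
    · have hx_mono := monotoneOn_Iic_of_le_sub_one hx
      have below : ∀ i ∈ Icc 1 (n + 1), max (x (i - 1)) (min (x i) u) = x i := fun i hi => by
        have hi' := mem_Icc.1 hi
        have hxi : x i ≤ x (n + 1) := hx_mono (by grind) (by grind) hi'.2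
        have hxi' : x (i - 1) ≤ x i := hx_mono (by grind) (by grind) (Nat.sub_le i 1)
        rw [min_eq_left (hxi.trans hgt.le), max_eq_right hxi']
      rw [sum_congr rfl fun i hi => congrArg h (below i hi), min_eq_right hu.2, max_eq_right hgt.le]
      abel

theorem eq_sum_comp_LFun_clampInv_sub_sum {G : Type*} [AddCommGroup G] {x a b : ℕ → ℝ} {n : ℕ}
    (hx : ∀ i ∈ Icc 1 (n + 1), x (i - 1) < x i) (hab : ∀ i ∈ Icc 1 (n + 1), a i < b i)
    (h : ℝ → G) {u : ℝ} (hu : u ∈ Set.Icc (x 0) (x (n + 1))) :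
    h u = ∑ i ∈ Icc 1 (n + 1), h (LFun x a b i (clampInv x a b i u)) - ∑ i ∈ Icc 1 n, h (x i) := by
  rw [eq_sum_comp_clamp_sub_sum (fun i hi => (hx i hi).le) h hu]
  congr 1
  exact sum_congr rfl fun i hi => by rw [LFun_clampInv x a b i (hx i hi) (hab i hi)]

/-- Two-dimensional multi-component decomposition:
`f(x, y) = ∑_{i,j} f_{i,j}(ψ_i(x), φ_j(y)) − ∑_{i} ∑_{j<m} f_{i,0}(ψ_i(x), y_j)
 − ∑_{i<n} ∑_{j} f_{0,j}(x_i, φ_j(y)) + ∑_{i<n} ∑_{j<m} f(x_i, y_j)`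
on `[x_0, x_n] × [y_0, y_m]`. -/
theorem mmnn_decomposition_2D (n m : ℕ) (hn : 1 ≤ n) (hm : 1 ≤ m)
    (x a b : ℕ → ℝ) (y c d : ℕ → ℝ)
    (hx : ∀ i ∈ Finset.Icc 1 n, x (i - 1) < x i)
    (hy : ∀ j ∈ Finset.Icc 1 m, y (j - 1) < y j)
    (hab : ∀ i ∈ Finset.Icc 1 n, a i < b i)
    (hcd : ∀ j ∈ Finset.Icc 1 m, c j < d j)
    (f : ℝ → ℝ → ℝ) :
    ∀ u ∈ Set.Icc (x 0) (x n), ∀ v ∈ Set.Icc (y 0) (y m),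
      f u v =
        (∑ i ∈ Finset.Icc 1 n, ∑ j ∈ Finset.Icc 1 m,
            f (LFun x a b i (clampInv x a b i u)) (LFun y c d j (clampInv y c d j v)))
          - (∑ i ∈ Finset.Icc 1 n, ∑ j ∈ Finset.Icc 1 (m - 1),
              f (LFun x a b i (clampInv x a b i u)) (y j))
          - (∑ i ∈ Finset.Icc 1 (n - 1), ∑ j ∈ Finset.Icc 1 m,
              f (x i) (LFun y c d j (clampInv y c d j v)))
          + ∑ i ∈ Finset.Icc 1 (n - 1), ∑ j ∈ Finset.Icc 1 (m - 1), f (x i) (y j) := by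
  intro u hu v hv
  obtain ⟨n, rfl⟩ := Nat.exists_eq_add_of_le' hn
  obtain ⟨m, rfl⟩ := Nat.exists_eq_add_of_le' hm
  simp only [Nat.add_sub_cancel]
  have decomp_y (t : ℝ) := eq_sum_comp_LFun_clampInv_sub_sum hy hcd (f t) hv
  rw [eq_sum_comp_LFun_clampInv_sub_sum hx hab (fun t => f t v) hu,
    sum_congr rfl fun i _ => decomp_y _, sum_congr rfl fun i _ => decomp_y (x i),
    sum_sub_distrib, sum_sub_distrib]
  abel
end
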